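/- arXiv:1102.1037 — 5 statements merged into one kernel-verified Lean document; each statement's English description precedes it below -/
import Mathlib

section
/- The ring B_n = ℂ[e,f,h,x,y]/(e y² + h x y - f x² - (h² + 4ef)^{n+1}) is an integral domain for every n ≥ 1. -/
/-!
Regard the relation as a quadratic `e y² + (h x) y - (f x² + Δ^{n+1})` in `y` over
`ℂ[e,f,h,x]`. Its leading coefficient `e` is prime and does not divide `h x`, so a factorisation
can only split it into two linear factors, one of them with unit leading coefficient, which would
give a root in `ℂ[e,f,h,x]`. There is none: at `e = f = x = 0`, `h = 1` the relation reads
`-1 = 0`. Hence the relation is irreducible, so prime in the factorial ring `ℂ[e,f,h,x,y]`.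
-/

open MvPolynomial

/-- The variables: `0 ↦ e, 1 ↦ f, 2 ↦ h, 3 ↦ x, 4 ↦ y`. -/
noncomputable def bnRelation (n : ℕ) : MvPolynomial (Fin 5) ℂ :=
  X 0 * X 4 ^ 2 + X 2 * X 3 * X 4 - X 1 * X 3 ^ 2 - (X 2 ^ 2 + 4 * X 0 * X 1) ^ (n + 1)

namespace Polynomial

variable {R : Type*} [CommRing R]

theorem exists_isRoot_of_natDegree_eq_one_of_isUnit_leadingCoeff {g : R[X]}
    (hdeg : g.natDegree = 1) (hunit : IsUnit g.leadingCoeff) : ∃ r, g.IsRoot r := by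
  obtain ⟨u, hu⟩ := hunit
  have hg := eq_X_add_C_of_natDegree_le_one hdeg.le
  rw [← hdeg, ← leadingCoeff, ← hu] at hg
  generalize g.coeff 0 = c at hg
  subst hg
  refine ⟨-(↑u⁻¹ * c), ?_⟩
  rw [IsRoot, eval_add, eval_mul, eval_C, eval_X, eval_C]
  linear_combination (-c) * u.mul_inv

theorem irreducible_of_natDegree_eq_two [IsDomain R] {p : R[X]} (hdeg : p.natDegree = 2)
    (hlead : Irreducible p.leadingCoeff) (hdvd : ¬ p.leadingCoeff ∣ p.coeff 1)
    (hroot : ∀ r, ¬ p.IsRoot r) : Irreducible p := by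
  refine ⟨fun hu => by simpa [hdeg] using natDegree_eq_zero_of_isUnit hu, fun g h hgh => ?_⟩
  wlog hle : g.natDegree ≤ h.natDegree generalizing g h
  · exact (this h g (hgh.trans (mul_comm g h)) (by omega)).symm
  have hg0 : g ≠ 0 := by rintro rfl; simp_all
  have hh0 : h ≠ 0 := by rintro rfl; simp_all
  have hsum : g.natDegree + h.natDegree = 2 := by rw [← natDegree_mul hg0 hh0, ← hgh, hdeg]
  have hlc : p.leadingCoeff = g.leadingCoeff * h.leadingCoeff := by rw [hgh, leadingCoeff_mul]
  obtain hg | hg : g.natDegree = 0 ∨ g.natDegree = 1 := by omega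
  · left
    obtain ⟨u, rfl⟩ : ∃ u, g = C u := ⟨_, eq_C_of_natDegree_eq_zero hg⟩
    rw [leadingCoeff_C] at hlc
    rw [isUnit_C]
    refine (hlead.isUnit_or_isUnit hlc).resolve_right fun hunit => hdvd ?_
    calc p.leadingCoeff ∣ u := (hlc ▸ associated_mul_unit_left _ _ hunit).dvd
      _ ∣ p.coeff 1 := ⟨h.coeff 1, by rw [hgh, coeff_C_mul]⟩
  · exfalso
    obtain ⟨r, hr⟩ : ∃ r, g.IsRoot r ∨ h.IsRoot r := by
      rcases hlead.isUnit_or_isUnit hlc with hunit | hunit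
      · obtain ⟨r, hr⟩ := exists_isRoot_of_natDegree_eq_one_of_isUnit_leadingCoeff hg hunit
        exact ⟨r, .inl hr⟩
      · obtain ⟨r, hr⟩ :=
          exists_isRoot_of_natDegree_eq_one_of_isUnit_leadingCoeff (by omega) hunit
        exact ⟨r, .inr hr⟩
    apply hroot r
    rw [hgh, IsRoot, eval_mul, mul_eq_zero]
    exact hr

theorem irreducible_C_mul_X_sq_add_C_mul_X_add_C [IsDomain R] {a b c : R} (ha : Irreducible a)
    (hab : ¬ a ∣ b) (hroot : ∀ r, a * r ^ 2 + b * r + c ≠ 0) :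
    Irreducible (C a * X ^ 2 + C b * X + C c) := by
  have hlead := leadingCoeff_quadratic (b := b) (c := c) ha.ne_zero
  refine irreducible_of_natDegree_eq_two (natDegree_quadratic ha.ne_zero) (by rwa [hlead]) ?_ ?_
  · simpa [hlead, coeff_X, coeff_C] using hab
  · simpa using hroot

end Polynomial

namespace MvPolynomial

variable (R : Type*) [CommSemiring R] (n : ℕ)

noncomputable def finLastEquiv : MvPolynomial (Fin (n + 1)) R ≃ₐ[R]
    Polynomial (MvPolynomial (Fin n) R) :=
  (renameEquiv R (finSuccEquiv' (Fin.last n))).trans (optionEquivLeft R (Fin n))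

variable {R n}

theorem finLastEquiv_X_castSucc (i : Fin n) :
    finLastEquiv R n (X i.castSucc) = Polynomial.C (X i) := by
  rw [finLastEquiv, AlgEquiv.trans_apply, renameEquiv_apply, rename_X,
    finSuccEquiv'_last_apply_castSucc, optionEquivLeft_X_some]

theorem finLastEquiv_X_last : finLastEquiv R n (X (Fin.last n)) = Polynomial.X := by
  rw [finLastEquiv, AlgEquiv.trans_apply, renameEquiv_apply, rename_X, finSuccEquiv'_at,
    optionEquivLeft_X_none]

end MvPolynomial

theorem finLastEquiv_bnRelation (n : ℕ) :
    finLastEquiv ℂ 4 (bnRelation n) =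
      Polynomial.C (X 0) * Polynomial.X ^ 2 + Polynomial.C (X 2 * X 3) * Polynomial.X +
        Polynomial.C (-(X 1 * X 3 ^ 2 + (X 2 ^ 2 + 4 * X 0 * X 1) ^ (n + 1))) := by
  obtain ⟨he, hf, hh, hx, hy⟩ :
      finLastEquiv ℂ 4 (X 0) = Polynomial.C (X 0) ∧ finLastEquiv ℂ 4 (X 1) = Polynomial.C (X 1) ∧
      finLastEquiv ℂ 4 (X 2) = Polynomial.C (X 2) ∧ finLastEquiv ℂ 4 (X 3) = Polynomial.C (X 3) ∧
      finLastEquiv ℂ 4 (X 4) = Polynomial.X :=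
    ⟨finLastEquiv_X_castSucc 0, finLastEquiv_X_castSucc 1, finLastEquiv_X_castSucc 2,
      finLastEquiv_X_castSucc 3, finLastEquiv_X_last⟩
  simp only [bnRelation, map_add, map_sub, map_mul, map_pow, map_ofNat, he, hf, hh, hx, hy, map_neg]
  ring

theorem irreducible_bnRelation (n : ℕ) : Irreducible (bnRelation n) := by
  rw [← MulEquiv.irreducible_iff (finLastEquiv ℂ 4), finLastEquiv_bnRelation]
  refine Polynomial.irreducible_C_mul_X_sq_add_C_mul_X_add_C X_prime.irreducible ?_ ?_
  · simp [X_dvd_mul_iff]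
  · intro r hr
    simpa using congrArg (eval ![0, 0, 1, 0]) hr

theorem bn_isDomain_general (n : ℕ) :
    IsDomain (MvPolynomial (Fin 5) ℂ ⧸ Ideal.span {bnRelation n}) := by
  have hprime : Prime (bnRelation n) := (irreducible_bnRelation n).prime
  rw [Ideal.Quotient.isDomain_iff_prime, Ideal.span_singleton_prime hprime.ne_zero]
  exact hprime

/-- `B_n = ℂ[e,f,h,x,y]/(e y² + h x y - f x² - (h² + 4ef)^{n+1})` is an integral domain
for every `n ≥ 1`. -/
theorem bn_isDomain (n : ℕ) (hn : 1 ≤ n) :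
    IsDomain (MvPolynomial (Fin 5) ℂ ⧸ Ideal.span {bnRelation n}) :=
  bn_isDomain_general n
end

section
/- Let A be a filtered algebra with exhaustive ascending filtration A₀ ⊆ A₁ ⊆ ⋯ and t ∈ A with symbol σ(t) ∈ Gr A. If Gr A is a free module over ℂ[σ(t)], then A is a free module over ℂ[t]. -/
/-!
Freeness over `ℂ[σ(t)]` makes multiplication `σ` by the symbol of `t` injective on `Gr A`. In each
degree `m` choose a complement `C m` to the part of the `m`-th graded piece lying in the image of
`σ`. Since `σ` raises degree by `d ≥ 1`, a basis `(cᵢ)` of the `C m` yields the homogeneous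
`ℂ`-basis `(σ^k cᵢ)` of `Gr A`. Lift each `cᵢ` to `bᵢ ∈ A`; the symbols of the `t^k bᵢ` are the
`σ^k cᵢ`, and a family in a filtered space whose symbols form a basis of the associated graded is
itself a basis. So `(t^k bᵢ)` is a `ℂ`-basis of `A`, that is, `(bᵢ)` is a `ℂ[t]`-basis.
-/

namespace FilteredFree

variable {A : Type*} [Ring A] [Algebra ℂ A]

/-- `predF 𝓐 n = 𝓐 (n-1)` for `n ≥ 1`, and `⊥` for `n = 0`. -/
def predF (𝓐 : ℕ → Submodule ℂ A) : ℕ → Submodule ℂ A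
  | 0 => ⊥
  | k + 1 => 𝓐 k

/-- The `n`-th piece `𝓐 n / 𝓐 (n-1)` of the associated graded of the filtration `𝓐`. -/
abbrev grPiece (𝓐 : ℕ → Submodule ℂ A) (n : ℕ) : Type _ :=
  ↥(𝓐 n) ⧸ (Submodule.comap (𝓐 n).subtype (predF 𝓐 n))

/-- The associated graded vector space `Gr A = ⨁ₙ 𝓐 n / 𝓐 (n-1)`. -/
abbrev Gr (𝓐 : ℕ → Submodule ℂ A) : Type _ := DirectSum ℕ (fun n => grPiece 𝓐 n)

/-- Multiplication by the symbol `σ(t)` of an element `t ∈ 𝓐 d`, from the `n`-th graded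
piece to the `(n+d)`-th one. -/
noncomputable def grShift (𝓐 : ℕ → Submodule ℂ A) (t : A) (d : ℕ)
    (h : ∀ n, ∀ a ∈ 𝓐 n, t * a ∈ 𝓐 (n + d)) (n : ℕ) :
    grPiece 𝓐 n →ₗ[ℂ] grPiece 𝓐 (n + d) :=
  Submodule.mapQ _ _ ((LinearMap.mulLeft ℂ t).restrict (h n)) (by
    cases n with
    | zero => simp [predF]
    | succ k =>
        intro a ha
        have h1 : t * (a : A) ∈ 𝓐 (k + d) := h k _ ha
        have h2 : predF 𝓐 (k + 1 + d) = 𝓐 (k + d) := by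
          rw [show k + 1 + d = (k + d) + 1 from by omega]; rfl
        show _ ∈ _
        simp only [Submodule.mem_comap, h2, Submodule.coe_subtype]
        exact h1)

/-- Multiplication by the symbol `σ(t)` as a `ℂ`-linear endomorphism of `Gr A`. -/
noncomputable def grSymbolMul (𝓐 : ℕ → Submodule ℂ A) (t : A) (d : ℕ)
    (h : ∀ n, ∀ a ∈ 𝓐 n, t * a ∈ 𝓐 (n + d)) : Gr 𝓐 →ₗ[ℂ] Gr 𝓐 :=
  DirectSum.toModule ℂ ℕ (Gr 𝓐)
    (fun n => (DirectSum.lof ℂ ℕ (grPiece 𝓐) (n + d)).comp (grShift 𝓐 t d h n))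

open Polynomial DirectSum Finset

theorem free_polynomial_of_basis_X_pow_smul {K M ι : Type*} [CommSemiring K] [AddCommMonoid M]
    [Module K[X] M] [Module K M] [IsScalarTower K K[X] M] (v : ι → M)
    (b : Module.Basis (ι × ℕ) K M) (hb : ∀ i k, b (i, k) = (X ^ k : K[X]) • v i) :
    Module.Free K[X] M := by
  let B : Module.Basis (ι × ℕ) K (ι →₀ K[X]) :=
    (Finsupp.basis fun _ => basisMonomials K).reindex (Equiv.sigmaEquivProd ι ℕ)
  let φ := Finsupp.linearCombination K[X] v
  have hφ : φ.restrictScalars K = (B.equiv b (Equiv.refl _)).toLinearMap :=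
    B.ext fun ⟨i, k⟩ => by
      rw [LinearEquiv.coe_coe, Module.Basis.equiv_apply, Equiv.refl_apply, hb]
      simp [B, φ, X_pow_eq_monomial]
  have hbij : Function.Bijective φ := by
    simpa using congrArg DFunLike.coe hφ ▸ (B.equiv b (Equiv.refl _)).bijective
  exact Module.Free.of_equiv (LinearEquiv.ofBijective φ hbij)

theorem injective_of_free_aeval' {R M : Type*} [CommRing R] [IsDomain R] [AddCommMonoid M]
    [Module R M] (f : M →ₗ[R] M) [Module.Free R[X] (Module.AEval' f)] : Function.Injective f := by
  intro x y hxy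
  have hX : (X : R[X]) • Module.AEval'.of f x = (X : R[X]) • Module.AEval'.of f y := by
    rw [Module.AEval'.X_smul_of, Module.AEval'.X_smul_of, hxy]
  exact (Module.AEval'.of f).injective (smul_right_injective _ X_ne_zero hX)

section PowApply

variable {R M : Type*} [Ring R] [AddCommGroup M] [Module R M] {σ : M →ₗ[R] M} {C : Submodule R M}

theorem eq_zero_of_sum_range_pow_apply_eq_zero (hσ : Function.Injective σ)
    (hC : Disjoint C (LinearMap.range σ)) (n : ℕ) {x : ℕ → M} (hx : ∀ k, x k ∈ C)
    (hsum : ∑ k ∈ range n, (σ ^ k) (x k) = 0) : ∀ k < n, x k = 0 := by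
  induction n generalizing x with
  | zero => simp
  | succ n ih =>
    set y := ∑ k ∈ range n, (σ ^ k) (x (k + 1))
    have hsplit : σ y + x 0 = 0 := by
      simpa [y, sum_range_succ', pow_succ', map_sum] using hsum
    have hx0 : x 0 = 0 :=
      Submodule.disjoint_def.mp hC _ (hx 0)
        ⟨-y, by rw [map_neg, ← add_eq_zero_iff_neg_eq.mp hsplit]⟩
    have hy : y = 0 := hσ (by rwa [hx0, add_zero, ← map_zero σ] at hsplit)
    rintro (_ | k) hk
    · exact hx0
    · exact ih (fun k => hx (k + 1)) hy k (by omega)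

theorem linearIndependent_pow_apply (hσ : Function.Injective σ)
    (hC : Disjoint C (LinearMap.range σ)) {ι : Type*} {e : ι → M} (he : LinearIndependent R e)
    (heC : ∀ i, e i ∈ C) : LinearIndependent R fun p : ι × ℕ => (σ ^ p.2) (e p.1) := by
  classical
  rw [linearIndependent_iff']
  intro s g hs p hp
  set n := s.sup Prod.snd + 1
  have hn : ∀ q ∈ s, q.2 ∈ range n := fun q hq =>
    mem_range.mpr (Nat.lt_succ_of_le (le_sup (f := Prod.snd) hq))
  let x : ℕ → M := fun k => ∑ q ∈ s with q.2 = k, g q • e q.1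
  have hx : ∀ k, x k ∈ C := fun k => C.sum_mem fun q _ => C.smul_mem _ (heC q.1)
  have hxsum : ∑ k ∈ range n, (σ ^ k) (x k) = 0 := by
    rw [← hs, ← sum_fiberwise_of_maps_to hn]
    refine sum_congr rfl fun k _ => ?_
    rw [map_sum]
    refine sum_congr rfl fun q hq => ?_
    rw [(mem_filter.mp hq).2, map_smul]
  have hxp : ∑ i ∈ (s.filter (·.2 = p.2)).image Prod.fst, g (i, p.2) • e i = 0 := by
    rw [sum_image fun q hq q' hq' h => Prod.ext h (by grind)]
    rw [← eq_zero_of_sum_range_pow_apply_eq_zero hσ hC n hx hxsum p.2 (mem_range.mp (hn p hp))]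
    exact sum_congr rfl fun q hq => by rw [← (mem_filter.mp hq).2]
  exact linearIndependent_iff'.mp he _ _ hxp p.1 (mem_image.mpr ⟨p, mem_filter.mpr ⟨hp, rfl⟩, rfl⟩)

end PowApply

section GradedShift

variable {K : Type*} [Ring K] {V : ℕ → Type*} [∀ n, AddCommGroup (V n)] [∀ n, Module K (V n)]
  {d : ℕ} (f : ∀ n, V n →ₗ[K] V (n + d))

noncomputable def gradedShift : (⨁ n, V n) →ₗ[K] ⨁ n, V n :=
  toModule K ℕ _ fun n => lof K ℕ V (n + d) ∘ₗ f n

theorem gradedShift_lof (n : ℕ) (x : V n) :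
    gradedShift f (lof K ℕ V n x) = lof K ℕ V (n + d) (f n x) :=
  toModule_lof K n x

theorem component_gradedShift_add (n : ℕ) (z : ⨁ n, V n) :
    component K ℕ V (n + d) (gradedShift f z) = f n (component K ℕ V n z) := by
  induction z using DirectSum.induction_on with
  | zero => simp
  | of j x =>
    rw [← lof_eq_of K, gradedShift_lof, component.of, component.of]
    by_cases hj : j = n
    · subst hj; simp
    · rw [dif_neg hj, dif_neg (by omega), map_zero]
  | add x y hx hy => simp only [map_add, hx, hy]

theorem component_gradedShift_of_lt {m : ℕ} (hm : m < d) (z : ⨁ n, V n) :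
    component K ℕ V m (gradedShift f z) = 0 := by
  induction z using DirectSum.induction_on with
  | zero => simp
  | of j x => rw [← lof_eq_of K, gradedShift_lof, component.of, dif_neg (by omega)]
  | add x y hx hy => simp only [map_add, hx, hy, add_zero]

theorem lof_component_gradedShift_add (n : ℕ) (z : ⨁ n, V n) :
    lof K ℕ V (n + d) (component K ℕ V (n + d) (gradedShift f z)) =
      gradedShift f (lof K ℕ V n (component K ℕ V n z)) := by
  rw [component_gradedShift_add, gradedShift_lof]

theorem lof_component_gradedShift_mem_range (m : ℕ) (z : ⨁ n, V n) :
    lof K ℕ V m (component K ℕ V m (gradedShift f z)) ∈ LinearMap.range (gradedShift f) := by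
  rcases lt_or_ge m d with hm | hm
  · simp [component_gradedShift_of_lt f hm]
  · obtain ⟨n, rfl⟩ := Nat.exists_eq_add_of_le' hm
    exact ⟨_, (lof_component_gradedShift_add f n z).symm⟩

variable {f}

theorem disjoint_range_gradedShift {C : ∀ m, Submodule K (V m)}
    (hC : ∀ m, Disjoint (C m) ((LinearMap.range (gradedShift f)).comap (lof K ℕ V m))) :
    Disjoint (⨅ m, (C m).comap (component K ℕ V m)) (LinearMap.range (gradedShift f)) := by
  rw [Submodule.disjoint_def]
  rintro x hxC ⟨z, rfl⟩
  ext m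
  exact Submodule.disjoint_def.mp (hC m) _ (Submodule.mem_iInf _ |>.mp hxC m)
    (lof_component_gradedShift_mem_range f m z)

theorem eq_top_of_le_comap_gradedShift {C : ∀ m, Submodule K (V m)} (hd : 0 < d)
    (hC : ∀ m, C m ⊔ (LinearMap.range (gradedShift f)).comap (lof K ℕ V m) = ⊤)
    {S : Submodule K (⨁ n, V n)} (hCS : ∀ m, C m ≤ S.comap (lof K ℕ V m))
    (hS : S ≤ S.comap (gradedShift f)) : S = ⊤ := by
  have hlof : ∀ m, ⊤ ≤ S.comap (lof K ℕ V m) := by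
    intro m
    induction m using Nat.strong_induction_on with
    | _ m ih =>
    rw [← hC m]
    refine sup_le (hCS m) fun x ⟨z, hz⟩ => ?_
    have hx : lof K ℕ V m x = lof K ℕ V m (component K ℕ V m (gradedShift f z)) := by
      rw [hz, component.lof_self]
    rw [Submodule.mem_comap, hx]
    rcases lt_or_ge m d with hm | hm
    · rw [component_gradedShift_of_lt f hm, map_zero]
      exact S.zero_mem
    · obtain ⟨n, rfl⟩ := Nat.exists_eq_add_of_le' hm
      rw [lof_component_gradedShift_add]
      exact hS (ih n (by omega) trivial)
  rw [eq_top_iff]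
  rintro x -
  induction x using DirectSum.induction_on with
  | zero => exact S.zero_mem
  | of m x => exact hlof m trivial
  | add x y hx hy => exact S.add_mem hx hy

end GradedShift

section GradedBasis

variable {K : Type*} [Ring K] {V : ℕ → Type*} [∀ n, AddCommGroup (V n)] [∀ n, Module K (V n)]
  {d : ℕ} {f : ∀ n, V n →ₗ[K] V (n + d)} {C : ∀ m, Submodule K (V m)} {ι : ℕ → Type*}

theorem lof_mem_iInf_comap_component {n : ℕ} {x : V n} (hx : x ∈ C n) :
    lof K ℕ V n x ∈ ⨅ m, (C m).comap (component K ℕ V m) := by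
  refine Submodule.mem_iInf _ |>.mpr fun m => ?_
  rw [Submodule.mem_comap, component.of]
  split_ifs with h
  · subst h; exact hx
  · exact (C m).zero_mem

theorem linearIndependent_gradedShift_pow_lof (hf : Function.Injective (gradedShift f))
    (hC : ∀ m, Disjoint (C m) ((LinearMap.range (gradedShift f)).comap (lof K ℕ V m)))
    (c : ∀ m, Module.Basis (ι m) K (C m)) :
    LinearIndependent K fun p : (Σ m, ι m) × ℕ =>
      (gradedShift f ^ p.2) (lof K ℕ V p.1.1 (c p.1.1 p.1.2)) := by
  have he : LinearIndependent K fun i : Σ m, ι m => lof K ℕ V i.1 (c i.1 i.2) :=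
    DFinsupp.linearIndependent_single (R := K) (M := V) (fun m i => (c m i : V m))
      fun m => (c m).linearIndependent.map' _ (C m).ker_subtype
  have heC : ∀ i : Σ m, ι m,
      lof K ℕ V i.1 (c i.1 i.2) ∈ ⨅ m, (C m).comap (component K ℕ V m) :=
    fun i => lof_mem_iInf_comap_component (c i.1 i.2).2
  exact (linearIndependent_pow_apply hf (disjoint_range_gradedShift hC) he heC :)

theorem span_gradedShift_pow_lof_eq_top (hd : 0 < d)
    (hC : ∀ m, C m ⊔ (LinearMap.range (gradedShift f)).comap (lof K ℕ V m) = ⊤)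
    (c : ∀ m, Module.Basis (ι m) K (C m)) :
    Submodule.span K (Set.range fun p : (Σ m, ι m) × ℕ =>
      (gradedShift f ^ p.2) (lof K ℕ V p.1.1 (c p.1.1 p.1.2))) = ⊤ := by
  refine eq_top_of_le_comap_gradedShift hd hC (fun m x hx => ?_) ?_
  · have hspan := Submodule.mem_map_of_mem (f := lof K ℕ V m ∘ₗ (C m).subtype)
      ((c m).mem_span ⟨x, hx⟩)
    rw [Submodule.map_span, ← Set.range_comp] at hspan
    refine Submodule.span_mono ?_ hspan
    rintro _ ⟨i, rfl⟩
    exact ⟨(⟨m, i⟩, 0), rfl⟩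
  · rw [Submodule.span_le]
    rintro _ ⟨p, rfl⟩
    refine Submodule.subset_span ⟨(p.1, p.2 + 1), ?_⟩
    dsimp only
    rw [pow_succ', Module.End.mul_apply]

end GradedBasis

section Filtered

variable (𝓐 : ℕ → Submodule ℂ A)

noncomputable def symbolAt (n : ℕ) : 𝓐 n →ₗ[ℂ] Gr 𝓐 :=
  lof ℂ ℕ (grPiece 𝓐) n ∘ₗ Submodule.mkQ _

theorem symbolAt_congr {m n : ℕ} (hmn : m = n) {a b : A} (hab : a = b) (ha : a ∈ 𝓐 m)
    (hb : b ∈ 𝓐 n) : symbolAt 𝓐 m ⟨a, ha⟩ = symbolAt 𝓐 n ⟨b, hb⟩ := by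
  subst hmn hab
  rfl

theorem symbolAt_of_le (hmono : Monotone 𝓐) {m n : ℕ} (hmn : m ≤ n) {a : A} (ha : a ∈ 𝓐 m)
    (hn : a ∈ 𝓐 n) : symbolAt 𝓐 n ⟨a, hn⟩ = if m = n then symbolAt 𝓐 m ⟨a, ha⟩ else 0 := by
  split_ifs with h
  · exact symbolAt_congr 𝓐 h.symm rfl hn ha
  · obtain ⟨k, rfl⟩ : ∃ k, n = k + 1 := ⟨n - 1, by omega⟩
    have hk : (⟨a, hn⟩ : 𝓐 (k + 1)) ∈ (predF 𝓐 (k + 1)).comap (𝓐 (k + 1)).subtype :=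
      hmono (by omega : m ≤ k) ha
    rw [symbolAt, LinearMap.comp_apply, Submodule.mkQ_apply,
      (Submodule.Quotient.mk_eq_zero _).mpr hk, map_zero]

theorem component_symbolAt_mem_map_mkQ {S : Submodule ℂ A} {m : ℕ} (x : 𝓐 m) (hx : (x : A) ∈ S)
    (n : ℕ) : component ℂ ℕ (grPiece 𝓐) n (symbolAt 𝓐 m x) ∈
      (S.comap (𝓐 n).subtype).map (Submodule.mkQ _) := by
  rw [symbolAt, LinearMap.comp_apply, component.of]
  split_ifs with h
  · subst h
    exact ⟨x, hx, rfl⟩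
  · exact Submodule.zero_mem _

theorem linearIndependent_of_symbolAt (hmono : Monotone 𝓐) {ι : Type*} {deg : ι → ℕ} {w : ι → A}
    (hw : ∀ i, w i ∈ 𝓐 (deg i))
    (hsym : LinearIndependent ℂ fun i => symbolAt 𝓐 (deg i) (⟨w i, hw i⟩ : 𝓐 (deg i))) :
    LinearIndependent ℂ w := by
  classical
  rw [linearIndependent_iff']
  intro s g hs i hi
  by_contra hgi
  set s' := s.filter (g · ≠ 0)
  obtain ⟨j, hj, hjN⟩ := s'.exists_mem_eq_sup ⟨i, mem_filter.mpr ⟨hi, hgi⟩⟩ deg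
  set N := s'.sup deg
  have hwN : ∀ q ∈ s', w q ∈ 𝓐 N := fun q hq => hmono (le_sup hq) (hw q)
  have hs' : ∑ q ∈ s', g q • w q = 0 := by
    rw [← hs]
    exact sum_filter_of_ne fun q _ hq => left_ne_zero_of_smul hq
  have hsum : ∑ q ∈ s'.attach, g q • (⟨w q, hwN q q.2⟩ : 𝓐 N) = 0 := by
    ext
    rw [Submodule.coe_sum, Submodule.coe_zero, ← hs']
    exact sum_attach s' fun q => g q • w q
  have hrel : ∑ q ∈ s', (if deg q = N then g q else 0) • symbolAt 𝓐 (deg q) ⟨w q, hw q⟩ = 0 := by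
    rw [← map_zero (symbolAt 𝓐 N), ← hsum, map_sum, ← sum_attach]
    refine sum_congr rfl fun q _ => ?_
    rw [map_smul, symbolAt_of_le 𝓐 hmono (le_sup q.2) (hw q)]
    split_ifs
    · rfl
    · exact (zero_smul ℂ _).trans (smul_zero (A := Gr 𝓐) (g q)).symm
  -- Instance search does not find `AddCommGroup (Gr 𝓐)`, hence the semiring form of
  -- `linearIndependent_iff'` and the explicit instances of `zero_smul`, `smul_zero`.
  have := linearIndependent_iff'ₛ.mp hsym s' _ (fun _ => 0)
    (hrel.trans (sum_eq_zero fun q _ => zero_smul ℂ (symbolAt 𝓐 (deg q) ⟨w q, hw q⟩)).symm) j hj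
  rw [if_pos hjN.symm] at this
  exact (mem_filter.mp hj).2 this

theorem span_eq_top_of_symbolAt (hexh : ⨆ n, 𝓐 n = ⊤) {ι : Type*} {deg : ι → ℕ} {w : ι → A}
    (hw : ∀ i, w i ∈ 𝓐 (deg i))
    (hsym : Submodule.span ℂ
      (Set.range fun i => symbolAt 𝓐 (deg i) (⟨w i, hw i⟩ : 𝓐 (deg i))) = ⊤) :
    Submodule.span ℂ (Set.range w) = ⊤ := by
  set S := Submodule.span ℂ (Set.range w)
  have hfil : ∀ N, 𝓐 N ≤ S := by
    intro N
    induction N using Nat.strong_induction_on with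
    | _ N ih =>
    intro a ha
    have hle : (⊤ : Submodule ℂ (Gr 𝓐)).map (component ℂ ℕ (grPiece 𝓐) N) ≤
        (S.comap (𝓐 N).subtype).map (Submodule.mkQ _) := by
      rw [← hsym, Submodule.map_span, Submodule.span_le]
      rintro _ ⟨_, ⟨i, rfl⟩, rfl⟩
      exact component_symbolAt_mem_map_mkQ 𝓐 _ (Submodule.subset_span (Set.mem_range_self i)) N
    obtain ⟨s, hs, hsa⟩ :=
      hle (Submodule.mem_map_of_mem (Submodule.mem_top (x := symbolAt 𝓐 N ⟨a, ha⟩)))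
    rw [symbolAt, LinearMap.comp_apply, component.lof_self] at hsa
    have hdiff : a - s ∈ S := by
      have hpred := (Submodule.Quotient.eq _).mp hsa.symm
      cases N with
      | zero =>
        simp only [predF, Submodule.comap_bot, Submodule.ker_subtype, Submodule.mem_bot] at hpred
        rw [show a - s = 0 from congrArg Subtype.val hpred]
        exact S.zero_mem
      | succ k => exact ih k (by omega) hpred
    simpa using S.add_mem hdiff hs
  rw [eq_top_iff, ← hexh]
  exact iSup_le hfil

end Filtered

section Symbol

variable {𝓐 : ℕ → Submodule ℂ A} {t : A} {d : ℕ} (h : ∀ n, ∀ a ∈ 𝓐 n, t * a ∈ 𝓐 (n + d))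

theorem grSymbolMul_eq_gradedShift :
    grSymbolMul 𝓐 t d h = gradedShift (V := grPiece 𝓐) (grShift 𝓐 t d h) :=
  rfl

include h in
theorem pow_mul_mem (k : ℕ) {n : ℕ} {a : A} (ha : a ∈ 𝓐 n) : t ^ k * a ∈ 𝓐 (n + d * k) := by
  induction k with
  | zero => simpa using ha
  | succ k ih =>
    rw [pow_succ', mul_assoc, mul_add_one, ← add_assoc]
    exact h _ _ ih

theorem symbolAt_mul {n : ℕ} {a : A} (ha : a ∈ 𝓐 n) :
    symbolAt 𝓐 (n + d) ⟨t * a, h n a ha⟩ = grSymbolMul 𝓐 t d h (symbolAt 𝓐 n ⟨a, ha⟩) := by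
  rw [grSymbolMul_eq_gradedShift]
  exact (gradedShift_lof (V := grPiece 𝓐) (grShift 𝓐 t d h) n (Submodule.mkQ _ ⟨a, ha⟩)).symm

theorem symbolAt_pow_mul (k : ℕ) {n : ℕ} {a : A} (ha : a ∈ 𝓐 n) :
    symbolAt 𝓐 (n + d * k) ⟨t ^ k * a, pow_mul_mem h k ha⟩ =
      (grSymbolMul 𝓐 t d h ^ k) (symbolAt 𝓐 n ⟨a, ha⟩) := by
  induction k with
  | zero =>
    rw [pow_zero (grSymbolMul 𝓐 t d h), Module.End.one_apply]
    refine symbolAt_congr 𝓐 ?_ ?_ _ ha <;> simp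
  | succ k ih =>
    calc symbolAt 𝓐 (n + d * (k + 1)) ⟨t ^ (k + 1) * a, pow_mul_mem h (k + 1) ha⟩
        = symbolAt 𝓐 (n + d * k + d) ⟨t * (t ^ k * a), h _ _ (pow_mul_mem h k ha)⟩ :=
          symbolAt_congr 𝓐 (by ring) (by rw [pow_succ', mul_assoc]) _ (h _ _ (pow_mul_mem h k ha))
      _ = (grSymbolMul 𝓐 t d h ^ (k + 1)) (symbolAt 𝓐 n ⟨a, ha⟩) := by
          rw [symbolAt_mul h (pow_mul_mem h k ha), ih, pow_succ', Module.End.mul_apply]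

end Symbol

theorem free_of_gr_free_general (𝓐 : ℕ → Submodule ℂ A)
    (hmono : Monotone 𝓐) (hexh : ⨆ n, 𝓐 n = ⊤)
    (t : A) (d : ℕ) (hd : 1 ≤ d)
    (h : ∀ n, ∀ a ∈ 𝓐 n, t * a ∈ 𝓐 (n + d))
    (hfree : Module.Free (Polynomial ℂ) (Module.AEval' (grSymbolMul 𝓐 t d h))) :
    Module.Free (Polynomial ℂ) (Module.AEval' (LinearMap.mulLeft ℂ t)) := by
  set σ := gradedShift (V := grPiece 𝓐) (grShift 𝓐 t d h)
  have hσ : Function.Injective σ := injective_of_free_aeval' (grSymbolMul 𝓐 t d h)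
  choose C hC using fun m => ((LinearMap.range σ).comap (lof ℂ ℕ (grPiece 𝓐) m)).exists_isCompl
  let c := fun m => Module.Basis.ofVectorSpace ℂ (C m)
  choose b hb using fun i : Σ m, Module.Basis.ofVectorSpaceIndex ℂ (C m) =>
    Submodule.mkQ_surjective _ (c i.1 i.2 : grPiece 𝓐 i.1)
  have hw : ∀ p : _ × ℕ, t ^ p.2 * (b p.1 : A) ∈ 𝓐 (p.1.1 + d * p.2) := fun p =>
    pow_mul_mem h p.2 (b p.1).2
  have hsym : (fun p => symbolAt 𝓐 (p.1.1 + d * p.2) ⟨_, hw p⟩) =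
      fun p => (σ ^ p.2) (lof ℂ ℕ _ p.1.1 (c p.1.1 p.1.2)) := by
    funext p
    rw [symbolAt_pow_mul h p.2 (b p.1).2, ← hb]
    rfl
  have hli := linearIndependent_of_symbolAt 𝓐 hmono hw
    (hsym ▸ linearIndependent_gradedShift_pow_lof hσ (fun m => (hC m).symm.disjoint) c)
  have hspan := span_eq_top_of_symbolAt 𝓐 hexh hw
    (hsym ▸ span_gradedShift_pow_lof_eq_top hd (fun m => (hC m).symm.sup_eq_top) c)
  exact free_polynomial_of_basis_X_pow_smul (fun i => Module.AEval'.of _ (b i : A))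
    ((Module.Basis.mk hli hspan.ge).map (Module.AEval'.of _)) fun i k => by
      simp [Module.AEval'.X_pow_smul_of, LinearMap.pow_mulLeft]

/-- Let `A` be a filtered `ℂ`-algebra with exhaustive ascending filtration
`ℂ = 𝓐 0 ⊆ 𝓐 1 ⊆ ⋯` and let `t` be a central element, `t ∈ 𝓐 d \ 𝓐 (d-1)` with symbol
`σ(t) ∈ Gr A`.  If `Gr A` is free as a module over `ℂ[σ(t)]` (i.e. over `ℂ[X]` with `X`
acting by multiplication by `σ(t)`), then `A` is free as a module over `ℂ[t]` (i.e. over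
`ℂ[X]` with `X` acting by multiplication by `t`). -/
theorem free_of_gr_free (𝓐 : ℕ → Submodule ℂ A)
    (hmono : Monotone 𝓐) (hone : 𝓐 0 = 1) (hexh : ⨆ n, 𝓐 n = ⊤)
    (hmul : ∀ m n : ℕ, 𝓐 m * 𝓐 n ≤ 𝓐 (m + n))
    (t : A) (hcentral : ∀ a : A, Commute t a)
    (d : ℕ) (ht : t ∈ 𝓐 d) (hd : 1 ≤ d) (ht' : t ∉ 𝓐 (d - 1))
    (h : ∀ n, ∀ a ∈ 𝓐 n, t * a ∈ 𝓐 (n + d))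
    (hfree : Module.Free (Polynomial ℂ) (Module.AEval' (grSymbolMul 𝓐 t d h))) :
    Module.Free (Polynomial ℂ) (Module.AEval' (LinearMap.mulLeft ℂ t)) :=
  free_of_gr_free_general 𝓐 hmono hexh t d hd h hfree

end FilteredFree
end

section
/- Let A be an affine Noetherian ℂ-algebra and e ∈ A an element such that ad(e) acts locally nilpotently on A, and let M be a finitely generated e-torsion-free A-module. Then the GK-dimension of the localization-type module M[e^{-1}] over A[e^{-1}] is at most GK_A(M). -/
/-!
Clear denominators: for finite-dimensional `V' ⊆ A[e⁻¹]` and `N' ⊆ M[e⁻¹]` there are `l`, `k` and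
finite-dimensional `U ⊆ A`, `N ⊆ M` with `eˡ (1 + V') ⊆ U` and `eᵏ N' ⊆ N` inside the localizations.
As `ad e` is locally nilpotent, `1`, `e` and `U` lie in a finite-dimensional `ad e`-stable subspace
`T ⊆ A` killed by `(ad e)ᵖ`, and the binomial expansion
`e^(r+p) t = ∑ᵢ C(r+p, i) (ad e)^(r+p-i)(t) eⁱ` gives `e^(r+p) T ⊆ T^(p+1) eʳ`. Moving powers of `e`
to the right one factor at a time, `e^(k + (l+p) n) (1 + V')ⁿ N' ⊆ T^((p+1) n) N`; since `e` is a
unit in `A[e⁻¹]`, `dim (1 + V')ⁿ N' ≤ dim (T^(p+1))ⁿ N` for all `n`.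
-/

open Pointwise

/-- Gelfand–Kirillov dimension of a module `M` over a `ℂ`-algebra `A`:
the supremum over finite-dimensional subspaces `V ⊆ A`, `N ⊆ M` of
`limsup_n log dim((ℂ + V)ⁿ N) / log n`. -/
noncomputable def gkDimMod (A : Type*) [Ring A] [Algebra ℂ A]
    (M : Type*) [AddCommGroup M] [Module ℂ M] [Module A M] [IsScalarTower ℂ A M] : ENNReal :=
  ⨆ (V : Submodule ℂ A) (_ : FiniteDimensional ℂ V)
    (N : Submodule ℂ M) (_ : FiniteDimensional ℂ N),
    Filter.limsup (fun n : ℕ =>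
      ENNReal.ofReal (Real.log (Module.finrank ℂ
        (Submodule.span ℂ ((((1 ⊔ V) ^ n : Submodule ℂ A) : Set A) • (N : Set M)))) / Real.log n))
      Filter.atTop

/-- Gelfand–Kirillov dimension of a `ℂ`-algebra. -/
noncomputable def gkDim (A : Type*) [Ring A] [Algebra ℂ A] : ENNReal :=
  gkDimMod A A

open OreLocalization Submodule

namespace Submodule

variable {R A M : Type*} [CommSemiring R] [Semiring A] [Algebra R A]
  [AddCommMonoid M] [Module R M] [Module A M] [IsScalarTower R A M]

theorem span_coe_smul_coe (I : Submodule R A) (N : Submodule R M) :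
    span R ((I : Set A) • (N : Set M)) = I • N :=
  le_antisymm (span_le.mpr (smul_subset_smul I N))
    (smul_le.mpr fun _ ha _ hm => subset_span (Set.smul_mem_smul ha hm))

theorem smul_eq_map₂_lsmul (I : Submodule R A) (N : Submodule R M) :
    I • N = map₂ (Algebra.lsmul R R M).toLinearMap I N :=
  le_antisymm (smul_le.mpr fun _ ha _ hm => apply_mem_map₂ _ ha hm)
    (map₂_le.mpr fun _ ha _ hm => smul_mem_smul ha hm)

theorem fg_one : (1 : Submodule R A).FG := by
  rw [one_eq_span]
  exact fg_span_singleton 1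

theorem fg_smul {I : Submodule R A} {N : Submodule R M} (hI : I.FG) (hN : N.FG) :
    (I • N).FG := by
  rw [smul_eq_map₂_lsmul]
  exact hI.map₂ _ hN

end Submodule

namespace OreLocalization

variable {R : Type*} [Ring R] (k : Type*) [CommSemiring k] [Algebra k R]
  (S : Submonoid R) [OreSet S]

def numeratorAlgHom : R →ₐ[k] R[S⁻¹] :=
  { numeratorRingHom with commutes' := fun _ => rfl }

variable {X : Type*} [AddCommGroup X] [Module R X] [Module k X] [IsScalarTower k R X]

def numeratorLinearMap : X →ₗ[k] X[S⁻¹] where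
  toFun x := x /ₒ 1
  map_add' _ _ := add_oreDiv.symm
  map_smul' c x := (smul_oreDiv_one c x).symm

theorem numeratorAlgHom_toLinearMap :
    (numeratorAlgHom k S).toLinearMap = numeratorLinearMap k S :=
  rfl

theorem numeratorLinearMap_smul (a : R) (x : X) :
    numeratorLinearMap k S (a • x) = numeratorAlgHom k S a • numeratorLinearMap k S x :=
  smul_div_one.symm

theorem map_numeratorAlgHom_smul_map_le (I : Submodule k R) (N : Submodule k X) :
    I.map (numeratorAlgHom k S).toLinearMap • N.map (numeratorLinearMap k S)
      ≤ (I • N).map (numeratorLinearMap k S) := by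
  refine smul_le.mpr ?_
  rintro _ ⟨a, ha, rfl⟩ _ ⟨x, hx, rfl⟩
  exact ⟨a • x, smul_mem_smul ha hx, numeratorLinearMap_smul k S a x⟩

theorem eventually_exists_oreDiv_one_eq_pow_smul {e : R} [OreSet (Submonoid.powers e)]
    (x : X[(Submonoid.powers e)⁻¹]) :
    ∀ᶠ n in Filter.atTop,
      ∃ m : X, m /ₒ (1 : Submonoid.powers e) = (e ^ n /ₒ (1 : Submonoid.powers e)) • x := by
  induction x using OreLocalization.ind with
  | _ m s =>
    obtain ⟨j, hj⟩ := s.prop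
    filter_upwards [Filter.eventually_ge_atTop j] with n hn
    refine ⟨e ^ (n - j) • m, ?_⟩
    have hsplit : (e ^ n /ₒ (1 : Submonoid.powers e)) = (e ^ (n - j) /ₒ 1) * ((s : R) /ₒ 1) := by
      rw [mul_div_one, ← hj, ← pow_add, Nat.sub_add_cancel hn]
    rw [hsplit, mul_smul, OreLocalization.smul_cancel, smul_div_one]

theorem exists_fg_span_pow_smul_le_map (e : R) [OreSet (Submonoid.powers e)]
    (N' : Submodule k X[(Submonoid.powers e)⁻¹]) (hN' : N'.FG) :
    ∃ (n : ℕ) (N : Submodule k X), N.FG ∧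
      span k {numeratorAlgHom k (Submonoid.powers e) (e ^ n)} • N'
        ≤ N.map (numeratorLinearMap k (Submonoid.powers e)) := by
  obtain ⟨s, rfl⟩ := hN'
  obtain ⟨n, hn⟩ := ((Filter.eventually_all_finset s).mpr fun x _ =>
    eventually_exists_oreDiv_one_eq_pow_smul x).exists
  choose g hg using hn
  refine ⟨n, span k (Set.range fun x : s => g x x.2), fg_span (Set.finite_range _), ?_⟩
  have hgen : (span k (s : Set X[(Submonoid.powers e)⁻¹])).map
      (Algebra.lsmul k k _ (numeratorAlgHom k (Submonoid.powers e) (e ^ n)))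
      ≤ (span k (Set.range fun x : s => g x x.2)).map (numeratorLinearMap k _) := by
    rw [map_span, span_le]
    rintro _ ⟨x, hx, rfl⟩
    exact ⟨g x hx, subset_span ⟨⟨x, hx⟩, rfl⟩, hg x hx⟩
  refine smul_le.mpr fun r hr y hy => ?_
  obtain ⟨c, rfl⟩ := mem_span_singleton.mp hr
  rw [smul_assoc]
  exact smul_mem _ c (hgen (mem_map_of_mem hy))

end OreLocalization

section LocallyNilpotent

variable {R M : Type*} [CommSemiring R] [AddCommMonoid M] [Module R M]

theorem Module.End.exists_le_ker_pow_of_fg {f : Module.End R M} (hf : ∀ x, ∃ n, (f ^ n) x = 0)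
    {U : Submodule R M} (hU : U.FG) : ∃ p, U ≤ LinearMap.ker (f ^ p) := by
  obtain ⟨s, rfl⟩ := hU
  have hev : ∀ x ∈ s, ∀ᶠ p in Filter.atTop, (f ^ p) x = 0 := fun x _ => by
    obtain ⟨n, hn⟩ := hf x
    filter_upwards [Filter.eventually_ge_atTop n] with p hp
    rw [← Nat.sub_add_cancel hp, pow_add, Module.End.mul_apply, hn, map_zero]
  obtain ⟨p, hp⟩ := ((Filter.eventually_all_finset s).mpr hev).exists
  exact ⟨p, span_le.mpr hp⟩

theorem Module.End.exists_fg_invtSubmodule_le_ker_pow {f : Module.End R M}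
    (hf : ∀ x, ∃ n, (f ^ n) x = 0) {U : Submodule R M} (hU : U.FG) :
    ∃ (T : Submodule R M) (p : ℕ), T.FG ∧ U ≤ T ∧ T ∈ f.invtSubmodule ∧
      T ≤ LinearMap.ker (f ^ p) := by
  obtain ⟨p, hp⟩ := exists_le_ker_pow_of_fg hf hU
  have hmap : ∀ i, U.map (f ^ i) ≤ LinearMap.ker (f ^ p) := fun i => by
    rintro _ ⟨x, hx, rfl⟩
    rw [LinearMap.mem_ker, ← Module.End.mul_apply, ← pow_add, add_comm, pow_add,
      Module.End.mul_apply, hp hx, map_zero]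
  refine ⟨⨆ i : Fin (p + 1), U.map (f ^ (i : ℕ)), p, fg_iSup _ fun i => hU.map _, ?_,
    ?_, iSup_le fun i => hmap i⟩
  · have h0 := le_iSup (fun i : Fin (p + 1) => U.map (f ^ (i : ℕ))) 0
    rwa [Fin.val_zero, pow_zero, Module.End.one_eq_id, Submodule.map_id] at h0
  · refine (Module.End.mem_invtSubmodule_iff_map_le f).mpr ?_
    rw [Submodule.map_iSup]
    refine iSup_le fun i => ?_
    rw [← map_comp, ← Module.End.mul_eq_comp, ← pow_succ']
    rcases lt_or_eq_of_le (Nat.lt_succ_iff.mp i.isLt) with hi | hi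
    · exact le_iSup_of_le ⟨i + 1, by omega⟩ le_rfl
    · rintro _ ⟨x, hx, rfl⟩
      rw [hi, pow_succ', Module.End.mul_apply, hp hx, map_zero]
      exact zero_mem _

end LocallyNilpotent

section Adjoint

variable {k A : Type*} [CommRing k] [Ring A] [Algebra k A]

theorem pow_mul_eq_sum_choose_mul_pow (e a : A) (n : ℕ) :
    e ^ n * a = ∑ i ∈ Finset.range (n + 1),
      n.choose i • (((LinearMap.mulLeft k e - LinearMap.mulRight k e) ^ (n - i)) a * e ^ i) := by
  have hcomm : Commute (LinearMap.mulRight k e) (LinearMap.mulLeft k e - LinearMap.mulRight k e) :=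
    (LinearMap.commute_mulLeft_right e e).symm.sub_right (Commute.refl _)
  calc e ^ n * a
      = ((LinearMap.mulRight k e + (LinearMap.mulLeft k e - LinearMap.mulRight k e)) ^ n) a := by
        rw [add_sub_cancel, LinearMap.pow_mulLeft, LinearMap.mulLeft_apply]
    _ = _ := by
        rw [hcomm.add_pow, LinearMap.sum_apply]
        refine Finset.sum_congr rfl fun i _ => ?_
        rw [Module.End.mul_apply, Module.End.mul_apply, Module.End.natCast_apply, map_nsmul,
          map_nsmul, LinearMap.pow_mulRight, LinearMap.mulRight_apply]

theorem span_singleton_pow_add_mul_le (e : A) {T : Submodule k A} {p : ℕ} (h1 : 1 ≤ T) (he : e ∈ T)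
    (hinv : T ∈ Module.End.invtSubmodule (LinearMap.mulLeft k e - LinearMap.mulRight k e))
    (hker : T ≤ LinearMap.ker ((LinearMap.mulLeft k e - LinearMap.mulRight k e) ^ p)) (r : ℕ) :
    span k {e ^ (r + p)} * T ≤ T ^ (p + 1) * span k {e ^ r} := by
  set D := LinearMap.mulLeft k e - LinearMap.mulRight k e
  have hpow : ∀ j, ∀ t ∈ T, (D ^ j) t ∈ T := fun j t ht => by
    rw [Module.End.coe_pow]
    exact ((Module.End.mem_invtSubmodule_iff_mapsTo D).mp hinv).iterate j ht
  rw [span_singleton_mul]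
  rintro _ ⟨t, ht, rfl⟩
  change e ^ (r + p) * t ∈ _
  rw [pow_mul_eq_sum_choose_mul_pow (k := k)]
  refine sum_mem fun i hi => nsmul_mem ?_ _
  rcases le_or_gt i r with hir | hri
  · have hzero : (D ^ (r + p - i)) t = 0 := by
      rw [show r + p - i = (r - i) + p by omega, pow_add, Module.End.mul_apply, hker ht, map_zero]
    rw [hzero, zero_mul]
    exact zero_mem _
  · obtain ⟨j, rfl⟩ : ∃ j, i = r + j := ⟨i - r, by omega⟩
    have hj : j ≤ p := by have := Finset.mem_range.mp hi; omega
    rw [show r + p - (r + j) = p - j by omega, add_comm r j, pow_add e j r, ← mul_assoc]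
    refine mul_mem_mul ?_ (mem_span_singleton_self _)
    refine pow_le_pow_right' h1 (Nat.succ_le_succ hj) ?_
    rw [pow_succ']
    exact mul_mem_mul (hpow _ t ht) (pow_mem_pow T he j)

end Adjoint

section Growth

variable {K : Type*} [Field K]

theorem span_singleton_pow_mul_pow_le {B : Type*} [Ring B] [Algebra K B] (E : B)
    {U T : Submodule K B} {l p : ℕ} (hU : span K {E ^ l} * U ≤ T)
    (hcomm : ∀ r, span K {E ^ (r + p)} * T ≤ T ^ (p + 1) * span K {E ^ r}) (n r : ℕ) :
    span K {E ^ (r + (l + p) * n)} * U ^ n ≤ T ^ ((p + 1) * n) * span K {E ^ r} := by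
  induction n with
  | zero => simp
  | succ n ih =>
    have hE : span K {E ^ (r + (l + p) * (n + 1))}
        = span K {E ^ (r + (l + p) * n + p)} * span K {E ^ l} := by
      rw [span_mul_span, Set.singleton_mul_singleton, ← pow_add]
      ring_nf
    calc span K {E ^ (r + (l + p) * (n + 1))} * U ^ (n + 1)
        = span K {E ^ (r + (l + p) * n + p)} * (span K {E ^ l} * U) * U ^ n := by
          rw [hE, pow_succ', mul_assoc, mul_assoc, mul_assoc]
      _ ≤ span K {E ^ (r + (l + p) * n + p)} * T * U ^ n :=
          mul_le_mul' (mul_le_mul' le_rfl hU) le_rfl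
      _ ≤ T ^ (p + 1) * (span K {E ^ (r + (l + p) * n)} * U ^ n) := by
          rw [← mul_assoc]
          exact mul_le_mul' (hcomm _) le_rfl
      _ ≤ T ^ (p + 1) * (T ^ ((p + 1) * n) * span K {E ^ r}) := mul_le_mul' le_rfl ih
      _ = T ^ ((p + 1) * (n + 1)) * span K {E ^ r} := by
          rw [← mul_assoc, ← pow_add]
          ring_nf

theorem finrank_le_of_span_singleton_smul_le {B L : Type*} [Ring B] [Algebra K B] [AddCommGroup L]
    [Module K L] [Module B L] [IsScalarTower K B L] {u : B} (hu : IsUnit u)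
    {X Y : Submodule K L} [FiniteDimensional K Y] (h : span K {u} • X ≤ Y) :
    Module.finrank K X ≤ Module.finrank K Y := by
  have hmap : X.map (Algebra.lsmul K K L u) ≤ span K {u} • X :=
    map_le_iff_le_comap.mpr fun x hx => Submodule.smul_mem_smul (mem_span_singleton_self u) hx
  calc Module.finrank K X = Module.finrank K (X.map (Algebra.lsmul K K L u)) :=
        (equivMapOfInjective _ (fun _ _ hxy => hu.smul_left_cancel.mp hxy) X).finrank_eq
    _ ≤ Module.finrank K Y := finrank_mono (hmap.trans h)

variable {A : Type*} [Ring A] [Algebra K A] {M : Type*} [AddCommGroup M] [Module K M] [Module A M]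
  [IsScalarTower K A M]

theorem exists_fg_finrank_pow_smul_le (e : A)
    (hnil : ∀ a : A, ∃ k : ℕ, ((LinearMap.mulLeft K e - LinearMap.mulRight K e) ^ k) a = 0)
    [OreSet (Submonoid.powers e)] {V' : Submodule K A[(Submonoid.powers e)⁻¹]}
    {N' : Submodule K M[(Submonoid.powers e)⁻¹]} (hV' : V'.FG) (hN' : N'.FG) :
    ∃ (V : Submodule K A) (N : Submodule K M), V.FG ∧ N.FG ∧
      ∀ n, Module.finrank K ((1 ⊔ V') ^ n • N' : Submodule K _)
        ≤ Module.finrank K ((1 ⊔ V) ^ n • N : Submodule K M) := by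
  set ι := numeratorAlgHom K (Submonoid.powers e)
  set ιM := numeratorLinearMap K (Submonoid.powers e) (X := M)
  obtain ⟨l, U₀, hU₀, hl⟩ := exists_fg_span_pow_smul_le_map K e
    (1 ⊔ V' : Submodule K A[(Submonoid.powers e)⁻¹]) (fg_one.sup hV')
  obtain ⟨k₀, N₀, hN₀, hk⟩ := exists_fg_span_pow_smul_le_map K e N' hN'
  obtain ⟨T, p, hT, hUT, hinv, hker⟩ := Module.End.exists_fg_invtSubmodule_le_ker_pow hnil
    ((fg_one.sup (fg_span_singleton e)).sup hU₀)
  have h1 : 1 ≤ T := le_sup_left.trans (le_sup_left.trans hUT)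
  have he : e ∈ T := hUT (mem_sup_left (mem_sup_right (mem_span_singleton_self e)))
  have hcomm : ∀ r, span K {ι e ^ (r + p)} * T.map ι.toLinearMap
      ≤ T.map ι.toLinearMap ^ (p + 1) * span K {ι e ^ r} := fun r => by
    simpa [Submodule.map_mul, Submodule.map_pow, map_span] using
      map_mono (f := ι.toLinearMap) (span_singleton_pow_add_mul_le e h1 he hinv hker r)
  have hU : span K {ι e ^ l} * (1 ⊔ V') ≤ T.map ι.toLinearMap := by
    rw [map_pow, ← numeratorAlgHom_toLinearMap] at hl
    exact hl.trans (map_mono (le_sup_right.trans hUT))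
  refine ⟨T ^ (p + 1), N₀, hT.pow _, hN₀, fun n => ?_⟩
  rw [sup_eq_right.mpr (one_le_pow_of_one_le' h1 _), ← pow_mul]
  have hfg : (T ^ ((p + 1) * n) • N₀).FG := fg_smul (hT.pow _) hN₀
  have : FiniteDimensional K ((T ^ ((p + 1) * n) • N₀).map ιM) :=
    Module.Finite.iff_fg.mpr (hfg.map _)
  have : FiniteDimensional K (T ^ ((p + 1) * n) • N₀ : Submodule K M) :=
    Module.Finite.iff_fg.mpr hfg
  have hunit : IsUnit (ι e ^ (k₀ + (l + p) * n)) :=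
    (numerator_isUnit (⟨e, Submonoid.mem_powers e⟩ : Submonoid.powers e)).pow _
  refine (finrank_le_of_span_singleton_smul_le hunit ?_).trans
    (finrank_map_le ιM _)
  rw [map_pow] at hk
  calc span K {ι e ^ (k₀ + (l + p) * n)} • (1 ⊔ V') ^ n • N'
      = (span K {ι e ^ (k₀ + (l + p) * n)} * (1 ⊔ V') ^ n) • N' :=
        (Submodule.smul_assoc _ _ _).symm
    _ ≤ (T.map ι.toLinearMap ^ ((p + 1) * n) * span K {ι e ^ k₀}) • N' :=
        smul_mono_left (span_singleton_pow_mul_pow_le _ hU hcomm n k₀)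
    _ = T.map ι.toLinearMap ^ ((p + 1) * n) • span K {ι e ^ k₀} • N' :=
        Submodule.smul_assoc _ _ _
    _ ≤ (T ^ ((p + 1) * n)).map ι.toLinearMap • N₀.map ιM := by
        rw [Submodule.map_pow]
        exact smul_mono le_rfl hk
    _ ≤ (T ^ ((p + 1) * n) • N₀).map ιM :=
        map_numeratorAlgHom_smul_map_le K _ _ _

end Growth

theorem Real.log_natCast_le_log_natCast {m n : ℕ} (h : m ≤ n) : Real.log m ≤ Real.log n := by
  rcases m.eq_zero_or_pos with rfl | hm
  · simpa using Real.log_natCast_nonneg n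
  · exact Real.log_le_log (Nat.cast_pos.mpr hm) (Nat.cast_le.mpr h)

open OreLocalization in
theorem gk_oreLocalization_le_general (A : Type*) [Ring A] [Algebra ℂ A] (e : A)
    (hnil : ∀ a : A, ∃ k : ℕ,
      ((LinearMap.mulLeft ℂ e - LinearMap.mulRight ℂ e) ^ k) a = 0)
    [OreLocalization.OreSet (Submonoid.powers e)]
    (M : Type*) [AddCommGroup M] [Module ℂ M] [Module A M] [IsScalarTower ℂ A M] :
    gkDimMod (OreLocalization (Submonoid.powers e) A)
        (OreLocalization (Submonoid.powers e) M)
      ≤ gkDimMod A M := by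
  refine iSup₂_le fun V' hV' => iSup₂_le fun N' hN' => ?_
  obtain ⟨V, N, hV, hN, hle⟩ := exists_fg_finrank_pow_smul_le e hnil
    (Module.Finite.iff_fg.mp hV') (Module.Finite.iff_fg.mp hN')
  refine le_iSup₂_of_le V (Module.Finite.iff_fg.mpr hV) <|
    le_iSup₂_of_le N (Module.Finite.iff_fg.mpr hN) <|
    Filter.limsup_le_limsup (Filter.Eventually.of_forall fun n => ?_)
  beta_reduce
  rw [span_coe_smul_coe, span_coe_smul_coe]
  exact ENNReal.ofReal_le_ofReal <| div_le_div_of_nonneg_right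
    (Real.log_natCast_le_log_natCast (hle n)) (Real.log_natCast_nonneg n)

open OreLocalization in
/-- **Lemma 7 (variant).** Let `A` be an affine Noetherian `ℂ`-algebra and `e ∈ A` an
element such that `ad(e)` acts locally nilpotently on `A` (so that the powers of `e` form
an Ore set), and let `M` be a finitely generated `e`-torsion-free `A`-module.  Then the
GK-dimension of the Ore localization `M[e⁻¹]` over `A[e⁻¹]` is at most `GK_A(M)`. -/
theorem gk_oreLocalization_le (A : Type*) [Ring A] [Algebra ℂ A] [IsNoetherianRing A]
    (haff : Algebra.FiniteType ℂ A) (e : A)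
    (hnil : ∀ a : A, ∃ k : ℕ,
      ((LinearMap.mulLeft ℂ e - LinearMap.mulRight ℂ e) ^ k) a = 0)
    [OreLocalization.OreSet (Submonoid.powers e)]
    (M : Type*) [AddCommGroup M] [Module ℂ M] [Module A M] [IsScalarTower ℂ A M]
    [Module.Finite A M]
    (htf : ∀ (m : M) (n : ℕ), e ^ n • m = 0 → m = 0) :
    gkDimMod (OreLocalization (Submonoid.powers e) A)
        (OreLocalization (Submonoid.powers e) M)
      ≤ gkDimMod A M :=
  gk_oreLocalization_le_general A e hnil M
end

section
/- In U(sl₂), the first Lie algebra cohomology H¹(ℂe, U(sl₂)/U(sl₂)(e-1)) vanishes, where ℂe acts by left multiplication (equivalently: the operator induced by e - 1 acting on U(sl₂)/U(sl₂)(e-1) by the adjoint/left action ad(e) is surjective). -/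
open LieAlgebra.SpecialLinear

/-- The standard nilpotent element `e = E₁₂ ∈ sl₂(ℂ)`. -/
noncomputable def sl2E : sl (Fin 2) ℂ := single 0 1 (by decide) (1 : ℂ)

/-!
`ad e` is locally nilpotent on `U = U(sl₂)`: it is a derivation of `U`, so the elements it kills
after finitely many steps form a subalgebra, and this subalgebra contains the generators `ι x`
because `ad e` is nilpotent on `sl₂` (already `e² = 0`). Hence `1 + ad e` is surjective on `U`,
with inverse `∑ₖ (-ad e)ᵏ`. Given `u`, pick `v` with `v + (e v - v e) = u`; then
`e v - u = v (e - 1)`, so `e • [v] = [u]` in `U ⧸ U(e - 1)`.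
-/

open Finset LieAlgebra

theorem Module.End.surjective_one_add_of_locallyNilpotent {R M : Type*} [Ring R]
    [AddCommGroup M] [Module R M] {N : Module.End R M} (hN : ∀ m, ∃ n, (N ^ n) m = 0) :
    Function.Surjective ⇑(1 + N) := by
  intro m
  obtain ⟨n, hn⟩ := hN m
  refine ⟨(∑ i ∈ range n, (-N) ^ i) m, ?_⟩
  rw [← Module.End.mul_apply, ← sub_neg_eq_add, mul_neg_geom_sum, LinearMap.sub_apply,
    neg_pow, Module.End.mul_apply, hn, map_zero, sub_zero, Module.End.one_apply]

section Associative

attribute [local instance 100] LieRing.ofAssociativeRing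

variable (R : Type*) {A : Type*} [CommRing R] [Ring A] [Algebra R A]

theorem LieAlgebra.ad_mul (a u v : A) :
    ad R A a (u * v) = ad R A a u * v + u * ad R A a v := by
  simp only [ad_apply, Ring.lie_def]
  noncomm_ring

theorem LieAlgebra.ad_pow_mul (a u v : A) (n : ℕ) :
    (ad R A a ^ n) (u * v) =
      ∑ ij ∈ antidiagonal n, n.choose ij.1 • ((ad R A a ^ ij.1) u * (ad R A a ^ ij.2) v) := by
  induction n with
  | zero => simp
  | succ n ih =>
    rw [sum_antidiagonal_choose_succ_nsmul (fun i j ↦ (ad R A a ^ i) u * (ad R A a ^ j) v) n]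
    simp only [pow_succ', Module.End.mul_apply, ih, map_sum, map_nsmul, ad_mul, nsmul_add,
      sum_add_distrib]
    rw [add_comm, add_left_cancel_iff, sum_congr rfl]
    rintro ⟨i, j⟩ hij
    rw [HasAntidiagonal.mem_antidiagonal] at hij
    rw [Nat.choose_symm_of_eq_add hij.symm]

/-- The associative analogue of `LieSubalgebra.engel`. -/
def Subalgebra.engel (a : A) : Subalgebra R A where
  carrier := {u | ∃ n, (ad R A a ^ n) u = 0}
  mul_mem' := by
    rintro u v ⟨p, hp⟩ ⟨q, hq⟩
    refine ⟨p + q, ?_⟩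
    rw [ad_pow_mul]
    refine sum_eq_zero fun ⟨i, j⟩ hij ↦ ?_
    obtain hi | hj : p ≤ i ∨ q ≤ j := by
      have := HasAntidiagonal.mem_antidiagonal.mp hij
      omega
    · rw [Module.End.pow_map_zero_of_le hi hp, zero_mul, smul_zero]
    · rw [Module.End.pow_map_zero_of_le hj hq, mul_zero, smul_zero]
  add_mem' := by
    rintro u v ⟨p, hp⟩ ⟨q, hq⟩
    refine ⟨max p q, ?_⟩
    rw [map_add, Module.End.pow_map_zero_of_le (le_max_left p q) hp,
      Module.End.pow_map_zero_of_le (le_max_right p q) hq, add_zero]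
  algebraMap_mem' r := ⟨1, by simp [Ring.lie_def, Algebra.commutes]⟩

theorem surjective_smul_quotient_span_sub_one {a : A} (ha : ∀ u, ∃ n, (ad R A a ^ n) u = 0) :
    Function.Surjective (fun m : A ⧸ Ideal.span {a - 1} => a • m) := by
  intro m
  obtain ⟨u, rfl⟩ := Submodule.Quotient.mk_surjective _ m
  obtain ⟨v, hv⟩ := Module.End.surjective_one_add_of_locallyNilpotent ha u
  have hu : u = v + (a * v - v * a) := by
    rw [← hv, LinearMap.add_apply, Module.End.one_apply, ad_apply, Ring.lie_def]
  refine ⟨Submodule.Quotient.mk v, ?_⟩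
  show a • Submodule.Quotient.mk v = Submodule.Quotient.mk u
  rw [← Submodule.Quotient.mk_smul, Submodule.Quotient.eq, smul_eq_mul, hu,
    show a * v - (v + (a * v - v * a)) = v • (a - 1) by rw [smul_eq_mul]; noncomm_ring]
  exact Submodule.smul_mem _ v (Submodule.mem_span_singleton_self _)

end Associative

namespace UniversalEnvelopingAlgebra

attribute [local instance 100] LieRing.ofAssociativeRing

variable (R : Type*) {L : Type*} [CommRing R] [LieRing L] [LieAlgebra R L]

theorem adjoin_range_ι :
    Algebra.adjoin R (Set.range (ι R : L → UniversalEnvelopingAlgebra R L)) = ⊤ := by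
  have hι : Set.range (ι R : L → UniversalEnvelopingAlgebra R L) =
      mkAlgHom R L '' Set.range (TensorAlgebra.ι R) := by
    rw [← Set.range_comp]; rfl
  rw [hι, Algebra.adjoin_image, TensorAlgebra.adjoin_range_ι, Algebra.map_top,
    AlgHom.range_eq_top]
  exact RingCon.mkₐ_surjective _

theorem ad_ι_pow_ι (x y : L) (n : ℕ) :
    (ad R (UniversalEnvelopingAlgebra R L) (ι R x) ^ n) (ι R y) = ι R ((ad R L x ^ n) y) := by
  induction n with
  | zero => rfl
  | succ n ih =>
    simp only [pow_succ', Module.End.mul_apply, ih]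
    rw [ad_apply, ad_apply, LieHom.map_lie]

theorem exists_ad_ι_pow_apply_eq_zero {x : L} (hx : IsNilpotent (ad R L x))
    (u : UniversalEnvelopingAlgebra R L) :
    ∃ n, (ad R (UniversalEnvelopingAlgebra R L) (ι R x) ^ n) u = 0 := by
  suffices h : Algebra.adjoin R (Set.range (ι R : L → UniversalEnvelopingAlgebra R L)) ≤
      Subalgebra.engel R (ι R x) from
    h (by rw [adjoin_range_ι]; exact Algebra.mem_top)
  rw [Algebra.adjoin_le_iff]
  rintro _ ⟨y, rfl⟩
  obtain ⟨n, hn⟩ := hx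
  exact ⟨n, by rw [ad_ι_pow_ι, hn, LinearMap.zero_apply, map_zero]⟩

end UniversalEnvelopingAlgebra

theorem isNilpotent_ad_sl2E : IsNilpotent (ad ℂ (sl (Fin 2) ℂ) sl2E) :=
  isNilpotent_ad_of_isNilpotent ⟨2, by
    show Matrix.single (0 : Fin 2) (1 : Fin 2) (1 : ℂ) ^ 2 = 0
    simp [pow_two]⟩

/-- `H¹(ℂe, U(sl₂)/U(sl₂)(e-1)) = 0`: the element `e` acts surjectively on the quotient
`M = U(sl₂)/U(sl₂)(e-1)` of the universal enveloping algebra of `sl₂` by the left ideal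
generated by `e - 1`, so the first Lie algebra cohomology of `ℂe` with coefficients in
`M` (the cokernel of the action of `e`) vanishes. -/
theorem h1_whittaker_vanishes :
    Function.Surjective
      (fun m : UniversalEnvelopingAlgebra ℂ (sl (Fin 2) ℂ) ⧸
          Ideal.span {UniversalEnvelopingAlgebra.ι ℂ sl2E - 1} =>
        (UniversalEnvelopingAlgebra.ι ℂ sl2E : UniversalEnvelopingAlgebra ℂ (sl (Fin 2) ℂ)) • m)
      :=
  surjective_smul_quotient_span_sub_one ℂ
    (UniversalEnvelopingAlgebra.exists_ad_ι_pow_apply_eq_zero ℂ isNilpotent_ad_sl2E)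
end

section
/- For every polynomial Q ∈ ℂ[t] there exists a unique polynomial P ∈ ℂ[t] such that Q(-s(s-1)) - Q(-s(s+1)) = (s-1)·P(-s(s-1)) + (s+1)·P(-s(s+1)) as polynomials in s. -/
open Polynomial

/-!
Put `a = -s(s-1)` and `b = -s(s+1)`. The substitution `s ↦ -s` swaps `a` and `b`, so both sides
of the identity are odd polynomials in `s`. The linear map `P ↦ (s-1)P(a) + (s+1)P(b)` sends a
polynomial of degree `n` to one of degree `2n+1` with leading coefficient `2(-1)ⁿ lc(P)`. Hence it
is injective, and subtracting the image of a suitable monomial lowers the degree of any odd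
polynomial, so by induction on the degree it hits every odd polynomial.
-/

namespace Polynomial

section CommRing

variable {R : Type*} [CommRing R]

variable (R) in
noncomputable def levyMap : R[X] →ₗ[R] R[X] where
  toFun P := (X - 1) * P.comp (-(X * (X - 1))) + (X + 1) * P.comp (-(X * (X + 1)))
  map_add' P Q := by simp only [add_comp]; ring
  map_smul' c P := by simp only [smul_comp, RingHom.id_apply, mul_smul_comm, smul_add]

lemma levyMap_apply (P : R[X]) :
    levyMap R P = (X - 1) * P.comp (-(X * (X - 1))) + (X + 1) * P.comp (-(X * (X + 1))) :=
  rfl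

lemma levyMap_eq_add (P : R[X]) :
    levyMap R P = (X + C (-1)) * P.comp (-(X * (X + C (-1))))
      + (X + C 1) * P.comp (-(X * (X + C 1))) := by
  simp only [levyMap_apply, map_neg, map_one, ← sub_eq_add_neg]

lemma neg_X_mul_X_sub_one_comp_neg_X : (-(X * (X - 1)) : R[X]).comp (-X) = -(X * (X + 1)) := by
  simp only [neg_comp, mul_comp, sub_comp, X_comp, one_comp]; ring

lemma neg_X_mul_X_add_one_comp_neg_X : (-(X * (X + 1)) : R[X]).comp (-X) = -(X * (X - 1)) := by
  simp only [neg_comp, mul_comp, add_comp, X_comp, one_comp]; ring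

lemma comp_sub_comp_comp_neg_X (Q : R[X]) :
    (Q.comp (-(X * (X - 1))) - Q.comp (-(X * (X + 1)))).comp (-X)
      = -(Q.comp (-(X * (X - 1))) - Q.comp (-(X * (X + 1)))) := by
  simp only [sub_comp, comp_assoc, neg_X_mul_X_sub_one_comp_neg_X,
    neg_X_mul_X_add_one_comp_neg_X]
  ring

lemma levyMap_comp_neg_X (P : R[X]) : (levyMap R P).comp (-X) = -levyMap R P := by
  simp only [levyMap_apply, add_comp, mul_comp, sub_comp, X_comp, one_comp, comp_assoc,
    neg_X_mul_X_sub_one_comp_neg_X, neg_X_mul_X_add_one_comp_neg_X]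
  ring

lemma leadingCoeff_neg_X_mul_X_add_C (c : R) : (-(X * (X + C c))).leadingCoeff = -1 := by
  rw [leadingCoeff_neg, (monic_X.mul (monic_X_add_C c)).leadingCoeff]

section Nontrivial

variable [Nontrivial R]

lemma natDegree_neg_X_mul_X_add_C (c : R) : (-(X * (X + C c))).natDegree = 2 := by
  rw [natDegree_neg, monic_X.natDegree_mul (monic_X_add_C c), natDegree_X, natDegree_X_add_C]

lemma natDegree_X_add_C_mul_comp_le (c : R) (P : R[X]) :
    ((X + C c) * P.comp (-(X * (X + C c)))).natDegree ≤ 2 * P.natDegree + 1 := by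
  refine natDegree_mul_le.trans ?_
  have := natDegree_comp_le (p := P) (q := -(X * (X + C c)))
  rw [natDegree_neg_X_mul_X_add_C] at this
  linarith [natDegree_X_add_C c]

lemma coeff_X_add_C_mul_comp (c : R) (P : R[X]) :
    ((X + C c) * P.comp (-(X * (X + C c)))).coeff (2 * P.natDegree + 1)
      = (-1) ^ P.natDegree * P.leadingCoeff := by
  have hq := natDegree_neg_X_mul_X_add_C c
  rw [show 2 * P.natDegree + 1 = 1 + P.natDegree * (-(X * (X + C c))).natDegree by rw [hq]; ring,
    coeff_mul_add_eq_of_natDegree_le (natDegree_X_add_C c).le natDegree_comp_le,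
    coeff_comp_degree_mul_degree (by rw [hq]; norm_num), leadingCoeff_neg_X_mul_X_add_C]
  simp [mul_comm]

lemma natDegree_levyMap_le (P : R[X]) : (levyMap R P).natDegree ≤ 2 * P.natDegree + 1 := by
  rw [levyMap_eq_add]
  exact natDegree_add_le_of_degree_le (natDegree_X_add_C_mul_comp_le _ P)
    (natDegree_X_add_C_mul_comp_le _ P)

lemma coeff_levyMap (P : R[X]) :
    (levyMap R P).coeff (2 * P.natDegree + 1) = 2 * ((-1) ^ P.natDegree * P.leadingCoeff) := by
  rw [levyMap_eq_add, coeff_add, coeff_X_add_C_mul_comp, coeff_X_add_C_mul_comp, two_mul]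

end Nontrivial

variable [IsDomain R] [NeZero (2 : R)]

lemma odd_natDegree_of_comp_neg_X_eq_neg {p : R[X]} (hp : p.comp (-X) = -p) (h0 : p ≠ 0) :
    Odd p.natDegree := by
  by_contra heven
  have hlc := congrArg leadingCoeff hp
  rw [comp_neg_X_leadingCoeff_eq, (Nat.not_odd_iff_even.1 heven).neg_one_pow, one_mul,
    leadingCoeff_neg, eq_neg_iff_add_eq_zero, ← two_mul] at hlc
  exact leadingCoeff_ne_zero.2 h0 ((mul_eq_zero.1 hlc).resolve_left two_ne_zero)

lemma levyMap_injective : Function.Injective (levyMap R) := by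
  refine (injective_iff_map_eq_zero _).2 fun P hP => ?_
  by_contra h0
  have := coeff_levyMap P
  rw [hP, coeff_zero] at this
  exact mul_ne_zero two_ne_zero (mul_ne_zero (pow_ne_zero _ (neg_ne_zero.2 one_ne_zero))
    (leadingCoeff_ne_zero.2 h0)) this.symm

end CommRing

section Field

variable {K : Type*} [Field K] [NeZero (2 : K)]

lemma exists_degree_sub_levyMap_lt {R : K[X]} (hR : R.comp (-X) = -R) (h0 : R ≠ 0) :
    ∃ P, (R - levyMap K P).degree < R.degree := by
  obtain ⟨k, hk⟩ := odd_natDegree_of_comp_neg_X_eq_neg hR h0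
  have hsign : (2 * (-1) ^ k : K) ≠ 0 := mul_ne_zero two_ne_zero (pow_ne_zero _ (by norm_num))
  set c := R.leadingCoeff / (2 * (-1) ^ k)
  have hc : c ≠ 0 := div_ne_zero (leadingCoeff_ne_zero.2 h0) hsign
  have hdeg : (C c * X ^ k).natDegree = k := natDegree_C_mul_X_pow k c hc
  have hcoeff : (levyMap K (C c * X ^ k)).coeff (2 * k + 1) = R.leadingCoeff := by
    have := coeff_levyMap (C c * X ^ k)
    rw [hdeg, leadingCoeff_C_mul_X_pow] at this
    rw [this, ← mul_assoc]
    exact mul_div_cancel₀ _ hsign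
  have hT0 : levyMap K (C c * X ^ k) ≠ 0 :=
    fun h => leadingCoeff_ne_zero.2 h0 (by rw [← hcoeff, h, coeff_zero])
  have hT : (levyMap K (C c * X ^ k)).natDegree = R.natDegree := by
    rw [hk]
    refine natDegree_eq_of_le_of_coeff_ne_zero
      ((natDegree_levyMap_le (C c * X ^ k)).trans_eq (by rw [hdeg])) ?_
    rw [hcoeff]
    exact leadingCoeff_ne_zero.2 h0
  refine ⟨C c * X ^ k, degree_sub_lt_left ?_ h0 ?_⟩
  · rw [degree_eq_natDegree h0, degree_eq_natDegree hT0, hT]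
  · change _ = (levyMap K _).coeff (levyMap K _).natDegree
    rw [hT, hk, hcoeff]

theorem exists_levyMap_eq {R : K[X]} (hR : R.comp (-X) = -R) : ∃ P, levyMap K P = R := by
  induction hn : R.natDegree using Nat.strong_induction_on generalizing R with
  | _ n ih =>
    rcases eq_or_ne R 0 with rfl | h0
    · exact ⟨0, map_zero _⟩
    obtain ⟨P₀, hlt⟩ := exists_degree_sub_levyMap_lt hR h0
    rcases eq_or_ne (R - levyMap K P₀) 0 with h | h
    · exact ⟨P₀, (sub_eq_zero.1 h).symm⟩
    have hodd : (R - levyMap K P₀).comp (-X) = -(R - levyMap K P₀) := by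
      rw [sub_comp, hR, levyMap_comp_neg_X, neg_sub, neg_sub_neg]
    obtain ⟨P₁, hP₁⟩ := ih _ (hn ▸ natDegree_lt_natDegree h hlt) hodd rfl
    exact ⟨P₀ + P₁, by rw [map_add, hP₁, add_sub_cancel]⟩

end Field

end Polynomial

/-- For every polynomial `Q ∈ ℂ[t]` there is a unique polynomial `P ∈ ℂ[t]` such that
`Q(-s(s-1)) - Q(-s(s+1)) = (s-1)·P(-s(s-1)) + (s+1)·P(-s(s+1))` as polynomials in `s`. -/
theorem levy_P_exists_unique (Q : Polynomial ℂ) :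
    ∃! P : Polynomial ℂ,
      Q.comp (-(X * (X - 1))) - Q.comp (-(X * (X + 1)))
        = (X - 1) * P.comp (-(X * (X - 1))) + (X + 1) * P.comp (-(X * (X + 1))) := by
  obtain ⟨P, hP⟩ := exists_levyMap_eq (comp_sub_comp_comp_neg_X Q)
  exact ⟨P, hP.symm, fun P' hP' => levyMap_injective (hP'.symm.trans hP.symm)⟩
end
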